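/- Let G be the semidirect product ℤ_27 ⋉ ℤ_7 given by the presentation ⟨a, b : a^27 = b^7 = e, a^{-1} b a = b^2⟩ (i.e., ℤ_27 acts on ℤ_7 with a generator of ℤ_27 acting as the squaring automorphism of ℤ_7). Then the rainbow connection number of the power graph Γ_G equals 2. -/

import Mathlib

/-!
The cyclic subgroup `⟨a³b⟩` of order 63 contains every element whose order divides 63 (it is the
preimage of the subgroup of order 9 of the cyclic quotient `G ⧸ ⟨b⟩`), and every other element
has order 27 and generates a Sylow 3-subgroup, which then contains all elements of order dividing 9.

Colour an edge by the parity of the number of its endpoints whose order is divisible by 7, except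
that an edge from `u` of order 27 to an element of order 9 gets a label depending only on the
Sylow subgroup `⟨u⟩`. Two non-adjacent vertices of different 7-parity are joined by a rainbow path
through the identity. Two non-adjacent vertices of equal 7-parity must both have order 27 and
generate different Sylow 3-subgroups; as there are at most 7 of these and at least 3 elements of
order 9, the labels can be chosen to separate any two of them at a common element of order 9.
One colour does not suffice because `a` and `b` are not adjacent.
-/

/-- The power graph of a group `G`: distinct elements `x` and `y` are adjacent
iff one is a power of the other. -/
def powerGraph (G : Type*) [Group G] : SimpleGraph G where
  Adj x y := x ≠ y ∧ (x ∈ Subgroup.zpowers y ∨ y ∈ Subgroup.zpowers x)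
  symm := ⟨fun x y h => ⟨h.1.symm, h.2.symm⟩⟩
  loopless := ⟨fun x h => h.1 rfl⟩

/-- `ζ` is a rainbow `k`-coloring of `Γ`: every pair of vertices is joined by a
path whose edges receive pairwise distinct colors. -/
def IsRainbowColoring {V : Type*} (Γ : SimpleGraph V) {k : ℕ} (ζ : Sym2 V → Fin k) : Prop :=
  ∀ u v : V, ∃ p : Γ.Walk u v, p.IsPath ∧ (p.edges.map ζ).Nodup

/-- The rainbow connection number of `Γ`: the least `k` admitting a rainbow
`k`-coloring. -/
noncomputable def rainbowConnection {V : Type*} (Γ : SimpleGraph V) : ℕ :=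
  sInf {k : ℕ | ∃ ζ : Sym2 V → Fin k, IsRainbowColoring Γ ζ}

/-- An element `x` is a maximal involution if it has order 2 and the only
cyclic subgroup containing `x` is `⟨x⟩`. -/
def IsMaximalInvolution {G : Type*} [Group G] (x : G) : Prop :=
  orderOf x = 2 ∧ ∀ g : G, x ∈ Subgroup.zpowers g → Subgroup.zpowers g = Subgroup.zpowers x

open Subgroup

namespace IsRainbowColoring

variable {V : Type*} {Γ : SimpleGraph V}

lemma exists_walk_length_le {k : ℕ} {ζ : Sym2 V → Fin k} (hζ : IsRainbowColoring Γ ζ)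
    (u v : V) : ∃ p : Γ.Walk u v, p.length ≤ k := by
  obtain ⟨p, -, hp⟩ := hζ u v
  refine ⟨p, ?_⟩
  simpa using hp.length_le_card

lemma of_forall_not_adj {k : ℕ} (ζ : Sym2 V → Fin k)
    (h : ∀ u v, u ≠ v → ¬ Γ.Adj u v →
      ∃ z, Γ.Adj u z ∧ Γ.Adj z v ∧ ζ s(u, z) ≠ ζ s(z, v)) :
    IsRainbowColoring Γ ζ := by
  intro u v
  by_cases huv : u = v
  · subst huv
    exact ⟨.nil, by simp, by simp⟩
  by_cases hadj : Γ.Adj u v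
  · exact ⟨hadj.toWalk, by simp [huv], by simp⟩
  obtain ⟨z, huz, hzv, hne⟩ := h u v huv hadj
  refine ⟨.cons huz (.cons hzv .nil), ?_, by simpa using hne⟩
  simp [SimpleGraph.Walk.isPath_def, huv, huz.ne, hzv.ne]

end IsRainbowColoring

lemma rainbowConnection_eq_two {V : Type*} {Γ : SimpleGraph V} {ζ : Sym2 V → Fin 2}
    (hζ : IsRainbowColoring Γ ζ) {u v : V} (huv : u ≠ v) (hnadj : ¬ Γ.Adj u v) :
    rainbowConnection Γ = 2 := by
  refine le_antisymm (Nat.sInf_le ⟨ζ, hζ⟩) (le_csInf ⟨2, ζ, hζ⟩ ?_)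
  rintro k ⟨ξ, hξ⟩
  obtain ⟨p, hp⟩ := hξ.exists_walk_length_le u v
  by_contra! hk
  have hlen : p.length < 2 := hp.trans_lt hk
  interval_cases h : p.length
  · exact huv (SimpleGraph.Walk.eq_of_length_eq_zero h)
  · exact hnadj (SimpleGraph.Walk.adj_of_length_eq_one h)

lemma Commute.mem_zpowers_mul_self_left {G : Type*} [Group G] {x y : G} (h : Commute x y)
    (hxy : (orderOf x).Coprime (orderOf y)) : x ∈ zpowers (x * y) := by
  obtain ⟨k, hkx, hky⟩ := Nat.chineseRemainder hxy 1 0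
  refine ⟨k, ?_⟩
  change (x * y) ^ (k : ℤ) = x
  rw [zpow_natCast, h.mul_pow, pow_eq_pow_iff_modEq.2 hkx, pow_eq_pow_iff_modEq.2 hky]
  simp

lemma mem_zpowers_of_orderOf_dvd {G : Type*} [Group G] [Finite G] {c u v : G}
    (hu : u ∈ zpowers c) (hv : v ∈ zpowers c) (hdvd : orderOf u ∣ orderOf v) :
    u ∈ zpowers v := by
  obtain ⟨i, rfl⟩ : ∃ i : ℕ, c ^ i = u := (mem_powers_iff_mem_zpowers).2 hu
  obtain ⟨j, rfl⟩ : ∃ j : ℕ, c ^ j = v := (mem_powers_iff_mem_zpowers).2 hv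
  set d := (orderOf c).gcd j
  have hd : c ^ d ∈ zpowers (c ^ j) := by
    have : c ^ (d : ℤ) =
        (c ^ orderOf c) ^ (orderOf c).gcdA j * (c ^ j) ^ (orderOf c).gcdB j := by
      rw [Nat.gcd_eq_gcd_ab, zpow_add, zpow_mul, zpow_mul, zpow_natCast, zpow_natCast]
    rw [pow_orderOf_eq_one, one_zpow, one_mul, zpow_natCast] at this
    exact this ▸ zpow_mem (mem_zpowers _) _
  have hdi : d ∣ i := by
    have hpos : 0 < orderOf c / d :=
      Nat.div_pos (Nat.gcd_le_left _ (orderOf_pos c)) (Nat.gcd_pos_of_pos_left _ (orderOf_pos c))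
    have : orderOf c ∣ i * orderOf (c ^ j) :=
      orderOf_dvd_of_pow_eq_one (by rw [pow_mul]; exact orderOf_dvd_iff_pow_eq_one.1 hdvd)
    rw [orderOf_pow c] at this
    nth_rw 1 [← Nat.mul_div_cancel' (Nat.gcd_dvd_left (orderOf c) j)] at this
    exact Nat.dvd_of_mul_dvd_mul_right hpos this
  obtain ⟨m, rfl⟩ := hdi
  rw [pow_mul]
  exact pow_mem hd m

lemma SemiconjBy.pow_left_of_pow_right {M : Type*} [Monoid M] {a x : M} {k : ℕ}
    (h : SemiconjBy a (x ^ k) x) (n : ℕ) : SemiconjBy (a ^ n) (x ^ k ^ n) x := by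
  induction n with
  | zero => simp
  | succ n ih =>
    rw [pow_succ a, pow_succ', pow_mul]
    exact ih.mul_left (h.pow_right _)

lemma normal_zpowers_of_zpowers_conj_eq {G : Type*} [Group G] {a b : G}
    (hgen : closure {a, b} = ⊤) (hconj : zpowers (a⁻¹ * b * a) = zpowers b) :
    (zpowers b).Normal := by
  have ha : a⁻¹ ∈ normalizer (zpowers b : Set G) := by
    rw [mem_normalizer_iff_map_conj_eq, MonoidHom.map_zpowers]
    simpa using hconj
  rw [← normalizer_eq_top_iff, eq_top_iff, ← hgen, closure_le]
  rintro x (rfl | rfl)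
  · exact inv_mem_iff.1 ha
  · exact le_normalizer (mem_zpowers x)

lemma QuotientGroup.zpowers_mk_eq_top {G : Type*} [Group G] {N : Subgroup G} [N.Normal]
    {a b : G} (hgen : closure {a, b} = ⊤) (hb : b ∈ N) : zpowers (a : G ⧸ N) = ⊤ := by
  have hle : closure {a, b} ≤ (zpowers (a : G ⧸ N)).comap (QuotientGroup.mk' N) := by
    rw [closure_le]
    rintro x (rfl | rfl)
    · exact mem_zpowers _
    · simp [(QuotientGroup.eq_one_iff x).2 hb]
  rw [eq_top_iff]
  rintro q -
  induction q using QuotientGroup.induction_on with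
  | H x => exact hle (hgen ▸ mem_top x)

lemma powerGraph_adj {G : Type*} [Group G] {x y : G} :
    (powerGraph G).Adj x y ↔ x ≠ y ∧ (x ∈ zpowers y ∨ y ∈ zpowers x) :=
  Iff.rfl

lemma powerGraph_adj_one_right {G : Type*} [Group G] {x : G} (hx : x ≠ 1) :
    (powerGraph G).Adj x 1 :=
  powerGraph_adj.2 ⟨hx, Or.inr (one_mem _)⟩

section EdgeColor

variable {G : Type*} [Group G]

noncomputable def edgeColor (σ : G → G → Fin 2) (u v : G) : Fin 2 :=
  if orderOf u = 27 ∧ orderOf v = 9 then σ u v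
  else if orderOf v = 27 ∧ orderOf u = 9 then σ v u
  else (if 7 ∣ orderOf u then 1 else 0) + (if 7 ∣ orderOf v then 1 else 0)

lemma edgeColor_comm (σ : G → G → Fin 2) (u v : G) : edgeColor σ u v = edgeColor σ v u := by
  unfold edgeColor
  split_ifs <;> omega

lemma edgeColor_one_right (σ : G → G → Fin 2) (u : G) :
    edgeColor σ u 1 = if 7 ∣ orderOf u then 1 else 0 := by
  simp [edgeColor]

lemma edgeColor_of_orderOf_eq_27 (σ : G → G → Fin 2) {u z : G} (hu : orderOf u = 27)
    (hz : orderOf z = 9) : edgeColor σ u z = σ u z := by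
  simp [edgeColor, hu, hz]

end EdgeColor

structure IsZ27SemidirectZ7 {G : Type*} [Group G] [Fintype G] (a b : G) : Prop where
  orderOf_a : orderOf a = 27
  orderOf_b : orderOf b = 7
  inv_mul_mul : a⁻¹ * b * a = b ^ 2
  closure_eq_top : closure {a, b} = ⊤
  card_eq : Fintype.card G = 189

namespace IsZ27SemidirectZ7

variable {G : Type*} [Group G] [Fintype G] {a b : G}

lemma commute_pow_three (h : IsZ27SemidirectZ7 a b) : Commute (a ^ 3) b := by
  have hab : SemiconjBy a (b ^ 2) b := by
    rw [SemiconjBy, ← h.inv_mul_mul]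
    group
  have hb : b ^ 2 ^ 3 = b ^ 1 := pow_eq_pow_iff_modEq.2 (by rw [h.orderOf_b]; decide)
  have := hab.pow_left_of_pow_right 3
  rwa [hb, pow_one] at this

lemma orderOf_pow_three (h : IsZ27SemidirectZ7 a b) : orderOf (a ^ 3) = 9 := by
  rw [orderOf_pow, h.orderOf_a]
  rfl

lemma coprime_orderOf_pow_three (h : IsZ27SemidirectZ7 a b) :
    (orderOf (a ^ 3)).Coprime (orderOf b) := by
  rw [h.orderOf_pow_three, h.orderOf_b]
  rfl

lemma orderOf_pow_three_mul (h : IsZ27SemidirectZ7 a b) : orderOf (a ^ 3 * b) = 63 := by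
  rw [h.commute_pow_three.orderOf_mul_eq_mul_orderOf_of_coprime h.coprime_orderOf_pow_three,
    h.orderOf_pow_three, h.orderOf_b]

lemma normal_zpowers (h : IsZ27SemidirectZ7 a b) : (zpowers b).Normal := by
  refine normal_zpowers_of_zpowers_conj_eq h.closure_eq_top ?_
  rw [h.inv_mul_mul]
  refine le_antisymm (zpowers_le.2 (pow_mem (mem_zpowers b) 2)) (zpowers_le.2 ?_)
  rw [mem_zpowers_pow_iff, h.orderOf_b]
  rfl

lemma mem_zpowers_of_orderOf_dvd_63 (h : IsZ27SemidirectZ7 a b) {g : G}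
    (hg : orderOf g ∣ 63) : g ∈ zpowers (a ^ 3 * b) := by
  have := h.normal_zpowers
  set N := zpowers b
  have hcardQ : Nat.card (G ⧸ N) = 27 := by
    have := card_eq_card_quotient_mul_card_subgroup N
    rw [Nat.card_eq_fintype_card, h.card_eq, Nat.card_zpowers, h.orderOf_b] at this
    omega
  have htop : zpowers (a : G ⧸ N) = ⊤ :=
    QuotientGroup.zpowers_mk_eq_top h.closure_eq_top (mem_zpowers b)
  have hg9 : orderOf (g : G ⧸ N) ∣ orderOf ((a : G ⧸ N) ^ 3) := by
    rw [orderOf_pow, orderOf_eq_card_of_zpowers_eq_top htop, hcardQ]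
    have h63 : orderOf (g : G ⧸ N) ∣ 63 := (orderOf_map_dvd (QuotientGroup.mk' N) g).trans hg
    have h27 : orderOf (g : G ⧸ N) ∣ 27 := hcardQ ▸ orderOf_dvd_natCard _
    exact Nat.dvd_gcd h63 h27
  have hgQ : (g : G ⧸ N) ∈ (zpowers (a ^ 3)).map (QuotientGroup.mk' N) := by
    rw [MonoidHom.map_zpowers]
    exact mem_zpowers_of_orderOf_dvd (htop ▸ mem_top _) (htop ▸ mem_top _) hg9
  have hle : N ⊔ zpowers (a ^ 3) ≤ zpowers (a ^ 3 * b) := by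
    refine sup_le (zpowers_le.2 ?_) (zpowers_le.2 ?_)
    · exact h.commute_pow_three.eq ▸
        h.commute_pow_three.symm.mem_zpowers_mul_self_left h.coprime_orderOf_pow_three.symm
    · exact h.commute_pow_three.mem_zpowers_mul_self_left h.coprime_orderOf_pow_three
  exact hle (QuotientGroup.comap_map_mk' N _ ▸ hgQ)

lemma not_isCyclic (h : IsZ27SemidirectZ7 a b) : ¬ IsCyclic G := by
  intro _
  have hb : b ^ 2 = b ^ 1 := by
    rw [← h.inv_mul_mul, mul_comm' a⁻¹ b, inv_mul_cancel_right, pow_one]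
  have := pow_eq_pow_iff_modEq.1 hb
  rw [h.orderOf_b] at this
  exact absurd this (by decide)

lemma orderOf_dvd_63_or_eq_27 (h : IsZ27SemidirectZ7 a b) (g : G) :
    orderOf g ∣ 63 ∨ orderOf g = 27 := by
  have hdvd : orderOf g ∣ 189 := h.card_eq ▸ orderOf_dvd_card
  have hne : orderOf g ≠ 189 := fun hg => h.not_isCyclic
    (isCyclic_of_orderOf_eq_card g (by rw [hg, Nat.card_eq_fintype_card, h.card_eq]))
  have key : ∀ d ∈ Nat.divisors 189, d ≠ 189 → d ∣ 63 ∨ d = 27 := by decide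
  exact key _ (Nat.mem_divisors.2 ⟨hdvd, by norm_num⟩) hne

lemma mem_zpowers_of_orderOf_dvd_nine (h : IsZ27SemidirectZ7 a b) {x z : G}
    (hx : orderOf x = 27) (hz : orderOf z ∣ 9) : z ∈ zpowers x := by
  have hx3 : orderOf (x ^ 3) = 9 := by rw [orderOf_pow, hx]; rfl
  refine zpowers_le.2 (pow_mem (mem_zpowers x) 3) (mem_zpowers_of_orderOf_dvd
    (h.mem_zpowers_of_orderOf_dvd_63 (hz.trans (by norm_num)))
    (h.mem_zpowers_of_orderOf_dvd_63 (by rw [hx3]; norm_num)) (hx3 ▸ hz))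

lemma index_zpowers_of_orderOf_eq_27 (h : IsZ27SemidirectZ7 a b) {x : G}
    (hx : orderOf x = 27) : (zpowers x).index = 7 := by
  have := card_mul_index (zpowers x)
  rw [Nat.card_zpowers, hx, Nat.card_eq_fintype_card, h.card_eq] at this
  omega

noncomputable def sylowOfOrderOf (h : IsZ27SemidirectZ7 a b) {x : G} (hx : orderOf x = 27) :
    Sylow 3 G :=
  (IsPGroup.of_card (n := 3) (by rw [Nat.card_zpowers, hx]; rfl)).toSylow
    (by rw [h.index_zpowers_of_orderOf_eq_27 hx]; decide)

lemma card_sylow_le (h : IsZ27SemidirectZ7 a b) : Nat.card (Sylow 3 G) ≤ 7 := by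
  have := Sylow.card_dvd_index (h.sylowOfOrderOf h.orderOf_a)
  rw [sylowOfOrderOf, IsPGroup.toSylow_coe, h.index_zpowers_of_orderOf_eq_27 h.orderOf_a] at this
  exact Nat.le_of_dvd (by norm_num) this

lemma three_le_card_orderOf_eq_nine (h : IsZ27SemidirectZ7 a b) :
    3 ≤ Nat.card {z : G // orderOf z = 9} := by
  have hord : ∀ i : Fin 3, orderOf (a ^ ![3, 6, 12] i) = 9 := by
    intro i
    rw [orderOf_pow, h.orderOf_a]
    fin_cases i <;> rfl
  have hinj : Function.Injective
      fun i => (⟨a ^ ![3, 6, 12] i, hord i⟩ : {z : G // orderOf z = 9}) := by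
    intro i j hij
    have := pow_eq_pow_iff_modEq.1 (congrArg Subtype.val hij)
    rw [h.orderOf_a] at this
    fin_cases i <;> fin_cases j <;> simp_all [Nat.ModEq]
  simpa using Nat.card_le_card_of_injective _ hinj

lemma exists_separating_labelling (h : IsZ27SemidirectZ7 a b) :
    ∃ σ : G → G → Fin 2, ∀ u v : G, orderOf u = 27 → orderOf v = 27 →
      zpowers u ≠ zpowers v → ∃ z, orderOf z = 9 ∧ σ u z ≠ σ v z := by
  classical
  have := Fintype.ofFinite (Sylow 3 G)
  have hcard : Fintype.card (Sylow 3 G) ≤ Fintype.card ({z : G // orderOf z = 9} → Fin 2) := by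
    simp only [← Nat.card_eq_fintype_card, Nat.card_fun, Nat.card_fin]
    calc Nat.card (Sylow 3 G) ≤ 2 ^ 3 := h.card_sylow_le.trans (by norm_num)
      _ ≤ _ := Nat.pow_le_pow_right two_pos h.three_le_card_orderOf_eq_nine
  obtain ⟨e⟩ := Function.Embedding.nonempty_of_card_le hcard
  refine ⟨fun u z => if hu : orderOf u = 27 then
    if hz : orderOf z = 9 then e (h.sylowOfOrderOf hu) ⟨z, hz⟩ else 0 else 0, ?_⟩
  intro u v hu hv huv
  have hne : e (h.sylowOfOrderOf hu) ≠ e (h.sylowOfOrderOf hv) :=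
    e.injective.ne fun hP => huv (by simpa [sylowOfOrderOf] using congrArg Sylow.toSubgroup hP)
  obtain ⟨⟨z, hz⟩, hzne⟩ := Function.ne_iff.1 hne
  exact ⟨z, hz, by simpa [hu, hv, hz] using hzne⟩

lemma mem_zpowers_or_mem_zpowers (h : IsZ27SemidirectZ7 a b) {u v : G}
    (h7 : 7 ∣ orderOf u ↔ 7 ∣ orderOf v) (h27 : ¬ (orderOf u = 27 ∧ orderOf v = 27)) :
    u ∈ zpowers v ∨ v ∈ zpowers u := by
  have hdiv₁ : ∀ d ∈ Nat.divisors 63, ¬ 7 ∣ d → d ∣ 9 := by decide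
  have hdiv₂ : ∀ d₁ ∈ Nat.divisors 63, ∀ d₂ ∈ Nat.divisors 63,
      (7 ∣ d₁ ↔ 7 ∣ d₂) → d₁ ∣ d₂ ∨ d₂ ∣ d₁ := by decide
  rcases h.orderOf_dvd_63_or_eq_27 u with hu | hu <;>
    rcases h.orderOf_dvd_63_or_eq_27 v with hv | hv
  · have hu' := Nat.mem_divisors.2 ⟨hu, by norm_num⟩
    have hv' := Nat.mem_divisors.2 ⟨hv, by norm_num⟩
    exact (hdiv₂ _ hu' _ hv' h7).imp
      (mem_zpowers_of_orderOf_dvd (h.mem_zpowers_of_orderOf_dvd_63 hu)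
        (h.mem_zpowers_of_orderOf_dvd_63 hv))
      (mem_zpowers_of_orderOf_dvd (h.mem_zpowers_of_orderOf_dvd_63 hv)
        (h.mem_zpowers_of_orderOf_dvd_63 hu))
  · refine .inl (h.mem_zpowers_of_orderOf_dvd_nine hv
      (hdiv₁ _ (Nat.mem_divisors.2 ⟨hu, by norm_num⟩) ?_))
    rw [h7, hv]
    decide
  · refine .inr (h.mem_zpowers_of_orderOf_dvd_nine hu
      (hdiv₁ _ (Nat.mem_divisors.2 ⟨hv, by norm_num⟩) ?_))
    rw [← h7, hu]
    decide
  · exact absurd ⟨hu, hv⟩ h27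

lemma exists_adj_adj_edgeColor_ne (h : IsZ27SemidirectZ7 a b) {σ : G → G → Fin 2}
    (hσ : ∀ u v : G, orderOf u = 27 → orderOf v = 27 →
      zpowers u ≠ zpowers v → ∃ z, orderOf z = 9 ∧ σ u z ≠ σ v z)
    {u v : G} (huv : u ≠ v) (hnadj : ¬ (powerGraph G).Adj u v) :
    ∃ z, (powerGraph G).Adj u z ∧ (powerGraph G).Adj z v ∧
      edgeColor σ u z ≠ edgeColor σ z v := by
  have hnmem : u ∉ zpowers v ∧ v ∉ zpowers u := by
    simpa [powerGraph_adj, huv, not_or] using hnadj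
  by_cases h7 : 7 ∣ orderOf u ↔ 7 ∣ orderOf v
  · obtain ⟨hu, hv⟩ : orderOf u = 27 ∧ orderOf v = 27 := by
      by_contra h27
      exact (h.mem_zpowers_or_mem_zpowers h7 h27).elim hnmem.1 hnmem.2
    obtain ⟨z, hz, hσz⟩ := hσ u v hu hv fun he => hnmem.1 (he ▸ mem_zpowers u)
    have hzu : z ∈ zpowers u := h.mem_zpowers_of_orderOf_dvd_nine hu hz.dvd
    have hzv : z ∈ zpowers v := h.mem_zpowers_of_orderOf_dvd_nine hv hz.dvd
    refine ⟨z, powerGraph_adj.2 ⟨?_, .inr hzu⟩, powerGraph_adj.2 ⟨?_, .inl hzv⟩, ?_⟩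
    · rintro rfl; omega
    · rintro rfl; omega
    · rwa [edgeColor_of_orderOf_eq_27 σ hu hz, edgeColor_comm,
        edgeColor_of_orderOf_eq_27 σ hv hz]
  · have hu : u ≠ 1 := fun hu => hnmem.1 (hu ▸ one_mem _)
    have hv : v ≠ 1 := fun hv => hnmem.2 (hv ▸ one_mem _)
    refine ⟨1, powerGraph_adj_one_right hu, (powerGraph_adj_one_right hv).symm, ?_⟩
    rw [edgeColor_one_right, edgeColor_comm, edgeColor_one_right]
    split_ifs <;> simp_all

lemma exists_isRainbowColoring (h : IsZ27SemidirectZ7 a b) :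
    ∃ ζ : Sym2 G → Fin 2, IsRainbowColoring (powerGraph G) ζ := by
  obtain ⟨σ, hσ⟩ := h.exists_separating_labelling
  refine ⟨Sym2.lift ⟨edgeColor σ, edgeColor_comm σ⟩, .of_forall_not_adj _ fun u v huv hnadj => ?_⟩
  simpa using h.exists_adj_adj_edgeColor_ne hσ huv hnadj

lemma ne (h : IsZ27SemidirectZ7 a b) : a ≠ b := by
  rintro rfl
  have := h.orderOf_a.symm.trans h.orderOf_b
  omega

lemma not_adj (h : IsZ27SemidirectZ7 a b) : ¬ (powerGraph G).Adj a b := by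
  rintro ⟨-, hab | hba⟩
  · have := orderOf_dvd_of_mem_zpowers hab
    rw [h.orderOf_a, h.orderOf_b] at this
    omega
  · have := orderOf_dvd_of_mem_zpowers hba
    rw [h.orderOf_a, h.orderOf_b] at this
    omega

end IsZ27SemidirectZ7

theorem rc_powerGraph_Z27_semidirect_Z7
    (G : Type*) [Group G] [Fintype G] (a b : G)
    (ha : orderOf a = 27) (hb : orderOf b = 7)
    (hrel : a⁻¹ * b * a = b ^ 2)
    (hgen : Subgroup.closure {a, b} = ⊤)
    (hcard : Fintype.card G = 189) :
    rainbowConnection (powerGraph G) = 2 := by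
  have h : IsZ27SemidirectZ7 a b := ⟨ha, hb, hrel, hgen, hcard⟩
  obtain ⟨ζ, hζ⟩ := h.exists_isRainbowColoring
  exact rainbowConnection_eq_two hζ h.ne h.not_adj
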